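/- With S(n) = ∑_{k=2}^∞ R_k(n) (the tail of the Rademacher series beyond the first term), one has lim_{n→∞} S(n)/L(n) = 0. -/

import Mathlib

open scoped Real

noncomputable section

/-- The Dedekind sum `s(h,k)`. -/
def dedekindSum (h k : ℤ) : ℝ :=
  ∑ r ∈ Finset.Ico (1 : ℤ) k,
    (r : ℝ) / k * ((h : ℝ) * r / k - ⌊(h : ℝ) * r / k⌋ - 1 / 2)

/-- `A_k(n) = ∑_{1 ≤ h ≤ k, (h,k)=1} exp(πi s(h,k) - 2πinh/k)`. -/
def radA (k n : ℕ) : ℂ :=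
  ∑ h ∈ (Finset.Icc 1 k).filter fun h => Nat.gcd h k = 1,
    Complex.exp (Real.pi * Complex.I * dedekindSum h k -
      2 * Real.pi * Complex.I * n * h / k)

/-- `g_k(x) = sinh((π/k)√((2/3)(x - 1/24)))/√(x - 1/24)`. -/
def radg (k : ℕ) (x : ℝ) : ℝ :=
  Real.sinh (Real.pi / k * Real.sqrt (2 / 3 * (x - 1 / 24))) / Real.sqrt (x - 1 / 24)

/-- `R_k(n) = (1/(π√2)) A_k(n) √k g_k'(n)`. -/
def radR (k n : ℕ) : ℂ :=
  ((1 / (Real.pi * Real.sqrt 2) : ℝ) : ℂ) * radA k n * ((Real.sqrt k : ℝ) : ℂ) *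
    ((deriv (radg k) n : ℝ) : ℂ)

/-- `S(n) = ∑_{k=2}^∞ R_k(n)`. -/
def radS (n : ℕ) : ℂ := ∑' k : ℕ, radR (k + 2) n

/-- `L(n) = (1/(4n√3)) exp(π√(2n/3))`. -/
def hardyRamanujanL (n : ℕ) : ℝ :=
  1 / (4 * n * Real.sqrt 3) * Real.exp (Real.pi * Real.sqrt (2 * n / 3))

/-! ### Auxiliary hyperbolic inequalities -/

lemma aux_sinh_le {t : ℝ} (ht : 0 ≤ t) : Real.sinh t ≤ t * Real.cosh t := by
  have hmono : MonotoneOn (fun t : ℝ => t * Real.cosh t - Real.sinh t) (Set.Ici 0) := by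
    apply monotoneOn_of_deriv_nonneg (convex_Ici 0)
    · fun_prop
    · intro x hx
      exact (((differentiable_id.mul Real.differentiable_cosh).sub
        Real.differentiable_sinh) x).differentiableWithinAt
    · intro x hx
      have hd : HasDerivAt (fun t : ℝ => t * Real.cosh t - Real.sinh t)
          (1 * Real.cosh x + x * Real.sinh x - Real.cosh x) x :=
        ((hasDerivAt_id x).mul (Real.hasDerivAt_cosh x)).sub (Real.hasDerivAt_sinh x)
      rw [hd.deriv]
      simp only [Set.mem_Ioi, interior_Ici] at hx
      have h1 : 0 ≤ Real.sinh x := Real.sinh_nonneg_iff.2 hx.le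
      nlinarith
  have := hmono (Set.self_mem_Ici) (Set.mem_Ici.2 ht) ht
  simp at this
  linarith

lemma aux_key {t : ℝ} (ht : 0 ≤ t) :
    t * Real.cosh t - Real.sinh t ≤ t ^ 3 * Real.cosh t := by
  have hmono : MonotoneOn
      (fun t : ℝ => t ^ 3 * Real.cosh t - (t * Real.cosh t - Real.sinh t)) (Set.Ici 0) := by
    apply monotoneOn_of_deriv_nonneg (convex_Ici 0)
    · fun_prop
    · intro x hx
      apply DifferentiableAt.differentiableWithinAt
      fun_prop
    · intro x hx
      simp only [Set.mem_Ioi, interior_Ici] at hx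
      have hd : HasDerivAt
          (fun t : ℝ => t ^ 3 * Real.cosh t - (t * Real.cosh t - Real.sinh t))
          ((3 * x ^ 2 * Real.cosh x + x ^ 3 * Real.sinh x) -
            ((1 * Real.cosh x + x * Real.sinh x) - Real.cosh x)) x := by
        exact (((hasDerivAt_pow 3 x).mul (Real.hasDerivAt_cosh x)).congr_deriv (by ring)).sub
          (((hasDerivAt_id x).mul (Real.hasDerivAt_cosh x)).sub (Real.hasDerivAt_sinh x))
      rw [hd.deriv]
      have h1 : Real.sinh x ≤ x * Real.cosh x := aux_sinh_le hx.le
      have h2 : 0 ≤ Real.sinh x := Real.sinh_nonneg_iff.2 hx.le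
      have h3 : 0 < Real.cosh x := Real.cosh_pos x
      nlinarith [mul_le_mul_of_nonneg_left h1 hx.le, mul_nonneg (pow_nonneg hx.le 3) h2,
        mul_nonneg (mul_nonneg (by norm_num : (0:ℝ) ≤ 2) (sq_nonneg x)) h3.le]
  have := hmono (Set.self_mem_Ici) (Set.mem_Ici.2 ht) ht
  simp at this
  linarith

/-! ### The derivative of `radg` -/

lemma radg_hasDerivAt {k : ℕ} {x : ℝ} (hx : 1 / 24 < x) :
    HasDerivAt (radg k)
      ((Real.cosh (Real.pi / k * Real.sqrt (2 / 3 * (x - 1 / 24))) *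
          (Real.pi / k * (1 / (2 * Real.sqrt (2 / 3 * (x - 1 / 24))) * (2 / 3 * 1))) *
          Real.sqrt (x - 1 / 24) -
        Real.sinh (Real.pi / k * Real.sqrt (2 / 3 * (x - 1 / 24))) *
          (1 / (2 * Real.sqrt (x - 1 / 24)) * 1)) /
        Real.sqrt (x - 1 / 24) ^ 2) x := by
  have hy : (0:ℝ) < x - 1 / 24 := by linarith
  have hw : (0:ℝ) < 2 / 3 * (x - 1 / 24) := by linarith
  have hu : (0:ℝ) < Real.sqrt (x - 1 / 24) := Real.sqrt_pos.2 hy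
  have h1 : HasDerivAt (fun x : ℝ => x - 1 / 24) 1 x := (hasDerivAt_id x).sub_const _
  have h2 : HasDerivAt (fun x : ℝ => Real.sqrt (x - 1 / 24))
      (1 / (2 * Real.sqrt (x - 1 / 24)) * 1) x :=
    (Real.hasDerivAt_sqrt hy.ne').comp x h1
  have h3 : HasDerivAt (fun x : ℝ => 2 / 3 * (x - 1 / 24)) (2 / 3 * 1) x := h1.const_mul _
  have h4 : HasDerivAt (fun x : ℝ => Real.sqrt (2 / 3 * (x - 1 / 24)))
      (1 / (2 * Real.sqrt (2 / 3 * (x - 1 / 24))) * (2 / 3 * 1)) x :=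
    (Real.hasDerivAt_sqrt hw.ne').comp x h3
  have h5 : HasDerivAt (fun x : ℝ => Real.pi / k * Real.sqrt (2 / 3 * (x - 1 / 24)))
      (Real.pi / k * (1 / (2 * Real.sqrt (2 / 3 * (x - 1 / 24))) * (2 / 3 * 1))) x :=
    h4.const_mul _
  have h6 : HasDerivAt (fun x : ℝ => Real.sinh (Real.pi / k * Real.sqrt (2 / 3 * (x - 1 / 24))))
      (Real.cosh (Real.pi / k * Real.sqrt (2 / 3 * (x - 1 / 24))) *
        (Real.pi / k * (1 / (2 * Real.sqrt (2 / 3 * (x - 1 / 24))) * (2 / 3 * 1)))) x :=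
    (Real.hasDerivAt_sinh _).comp x h5
  have := h6.div h2 hu.ne'
  unfold radg
  exact this

lemma deriv_radg_eq {k : ℕ} {x : ℝ} (hx : 1 / 24 < x) :
    deriv (radg k) x =
      (Real.pi / k * Real.sqrt (2 / 3 * (x - 1 / 24)) *
          Real.cosh (Real.pi / k * Real.sqrt (2 / 3 * (x - 1 / 24))) -
        Real.sinh (Real.pi / k * Real.sqrt (2 / 3 * (x - 1 / 24)))) /
        (2 * Real.sqrt (x - 1 / 24) ^ 3) := by
  have hy : (0:ℝ) < x - 1 / 24 := by linarith
  have hu : (0:ℝ) < Real.sqrt (x - 1 / 24) := Real.sqrt_pos.2 hy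
  have hs : Real.sqrt (2 / 3 * (x - 1 / 24)) = Real.sqrt (2 / 3) * Real.sqrt (x - 1 / 24) :=
    Real.sqrt_mul (by norm_num) _
  have hs2 : Real.sqrt (2 / 3) ^ 2 = 2 / 3 := Real.sq_sqrt (by norm_num)
  have hspos : (0:ℝ) < Real.sqrt (2 / 3) := Real.sqrt_pos.2 (by norm_num)
  rw [(radg_hasDerivAt hx).deriv, hs]
  set u := Real.sqrt (x - 1 / 24) with hudef
  set s := Real.sqrt (2 / 3) with hsdef
  rw [← hs2]
  have hsne : s ≠ 0 := hspos.ne'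
  have hune : u ≠ 0 := hu.ne'
  field_simp

lemma abs_deriv_radg_le {k : ℕ} {x : ℝ} (hx : 1 / 24 < x) :
    |deriv (radg k) x| ≤
      (Real.pi / k) ^ 3 * Real.exp (Real.pi / k * Real.sqrt (2 / 3 * (x - 1 / 24))) := by
  have hy : (0:ℝ) < x - 1 / 24 := by linarith
  have hu : (0:ℝ) < Real.sqrt (x - 1 / 24) := Real.sqrt_pos.2 hy
  have hs : Real.sqrt (2 / 3 * (x - 1 / 24)) = Real.sqrt (2 / 3) * Real.sqrt (x - 1 / 24) :=
    Real.sqrt_mul (by norm_num) _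
  have hs2 : Real.sqrt (2 / 3) ^ 2 = 2 / 3 := Real.sq_sqrt (by norm_num)
  have hsnn : (0:ℝ) ≤ Real.sqrt (2 / 3) := Real.sqrt_nonneg _
  have hsle : Real.sqrt (2 / 3) ≤ 1 := by
    rw [show (1:ℝ) = Real.sqrt 1 by simp]
    exact Real.sqrt_le_sqrt (by norm_num)
  have hknn : (0:ℝ) ≤ Real.pi / k := div_nonneg Real.pi_pos.le (Nat.cast_nonneg k)
  set t := Real.pi / k * Real.sqrt (2 / 3 * (x - 1 / 24)) with htdef
  have htnn : 0 ≤ t := mul_nonneg hknn (Real.sqrt_nonneg _)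
  rw [deriv_radg_eq hx]
  have hnum0 : 0 ≤ t * Real.cosh t - Real.sinh t := by
    have := aux_sinh_le htnn; linarith
  have hden : (0:ℝ) < 2 * Real.sqrt (x - 1 / 24) ^ 3 := by positivity
  rw [abs_of_nonneg (div_nonneg hnum0 hden.le)]
  have hnum1 : t * Real.cosh t - Real.sinh t ≤ t ^ 3 * Real.exp t := by
    have h1 := aux_key htnn
    have h2 : Real.cosh t ≤ Real.exp t := by
      rw [Real.cosh_eq]
      have : Real.exp (-t) ≤ Real.exp t := Real.exp_le_exp.2 (by linarith)
      linarith
    nlinarith [pow_nonneg htnn 3, Real.cosh_pos t]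
  have ht3 : t ^ 3 = (Real.pi / k) ^ 3 * Real.sqrt (2 / 3) ^ 3 * Real.sqrt (x - 1 / 24) ^ 3 := by
    rw [htdef, hs]; ring
  calc (t * Real.cosh t - Real.sinh t) / (2 * Real.sqrt (x - 1 / 24) ^ 3)
      ≤ t ^ 3 * Real.exp t / (2 * Real.sqrt (x - 1 / 24) ^ 3) := by
        gcongr
    _ ≤ (Real.pi / k) ^ 3 * Real.exp t := by
        rw [ht3]
        rw [div_le_iff₀ hden]
        have hcube : Real.sqrt (2 / 3) ^ 3 ≤ 1 := by
          calc Real.sqrt (2/3) ^ 3 ≤ 1 ^ 3 := pow_le_pow_left₀ hsnn hsle 3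
          _ = 1 := one_pow 3
        have he : 0 < Real.exp t := Real.exp_pos t
        have hP : (0:ℝ) ≤ (Real.pi / k) ^ 3 * Real.sqrt (x - 1 / 24) ^ 3 * Real.exp t :=
          by positivity
        nlinarith [mul_le_mul_of_nonneg_left hcube hP]

/-! ### Bounding `radA` and `radR` -/

lemma norm_radA_le (k n : ℕ) : ‖radA k n‖ ≤ k := by
  unfold radA
  refine (norm_sum_le (E := ℂ) _ _).trans ?_
  have h1 : ∀ h ∈ (Finset.Icc 1 k).filter fun h => Nat.gcd h k = 1,
      ‖Complex.exp (Real.pi * Complex.I * ((dedekindSum h k : ℝ) : ℂ) -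
        2 * Real.pi * Complex.I * n * h / k)‖ = 1 := by
    intro h _
    have he : (Real.pi * Complex.I * ((dedekindSum h k : ℝ) : ℂ) -
        2 * Real.pi * Complex.I * n * h / k)
        = (((Real.pi * dedekindSum h k - 2 * Real.pi * n * h / k : ℝ)) : ℂ) * Complex.I := by
      push_cast
      ring
    rw [he, Complex.norm_exp_ofReal_mul_I]
  rw [Finset.sum_congr rfl h1, Finset.sum_const, nsmul_eq_mul, mul_one]
  calc (((Finset.Icc 1 k).filter fun h => Nat.gcd h k = 1).card : ℝ)
      ≤ ((Finset.Icc 1 k).card : ℝ) := by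
        exact_mod_cast Finset.card_filter_le _ _
    _ = k := by rw [Nat.card_Icc]; simp

/-- helper sequence: `f k = (k √k)⁻¹`. -/
def auxf (k : ℕ) : ℝ := ((k : ℝ) * Real.sqrt k)⁻¹

lemma summable_auxf : Summable auxf := by
  have h : ∀ k : ℕ, ((k : ℝ) ^ ((3:ℝ)/2))⁻¹ = auxf k := by
    intro k
    unfold auxf
    rcases Nat.eq_zero_or_pos k with hk | hk
    · subst hk
      simp [Real.zero_rpow (by norm_num : ((3:ℝ)/2) ≠ 0)]
    · have hk0 : (0:ℝ) < k := by exact_mod_cast hk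
      rw [show ((3:ℝ)/2) = 1 + 1/2 by norm_num, Real.rpow_add hk0, Real.rpow_one,
        ← Real.sqrt_eq_rpow]
  exact Summable.congr (Real.summable_nat_rpow_inv.2 (by norm_num)) h

lemma norm_radR_le {k n : ℕ} (hk : 2 ≤ k) (hn : 1 ≤ n) :
    ‖radR k n‖ ≤ Real.pi ^ 2 * auxf k *
      Real.exp (Real.pi / 2 * Real.sqrt (2 * n / 3)) := by
  have hn1 : (1:ℝ) ≤ (n:ℝ) := by exact_mod_cast hn
  have hx : (1:ℝ) / 24 < (n:ℝ) := by linarith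
  have hk0 : (0:ℝ) < (k:ℝ) := by exact_mod_cast (by omega : 0 < k)
  have hk2 : (2:ℝ) ≤ (k:ℝ) := by exact_mod_cast hk
  have hskpos : 0 < Real.sqrt k := Real.sqrt_pos.2 hk0
  have hc : (0:ℝ) < 1 / (Real.pi * Real.sqrt 2) := by positivity
  have hnorm : ‖radR k n‖ =
      1 / (Real.pi * Real.sqrt 2) * ‖radA k n‖ * Real.sqrt k * |deriv (radg k) n| := by
    unfold radR
    rw [norm_mul, norm_mul, norm_mul, Complex.norm_real, Complex.norm_real, Complex.norm_real,
      Real.norm_eq_abs, Real.norm_eq_abs, abs_of_pos hc,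
      abs_of_nonneg (Real.sqrt_nonneg (k:ℝ)), Real.norm_eq_abs]
  rw [hnorm]
  -- bound the derivative term
  have hd : |deriv (radg k) n| ≤
      (Real.pi / k) ^ 3 * Real.exp (Real.pi / 2 * Real.sqrt (2 * n / 3)) := by
    refine (abs_deriv_radg_le hx).trans ?_
    have hdiv : Real.pi / (k:ℝ) ≤ Real.pi / 2 := by
      rw [div_le_div_iff₀ hk0 (by norm_num : (0:ℝ) < 2)]
      nlinarith [Real.pi_pos]
    have harg : Real.pi / k * Real.sqrt (2 / 3 * ((n:ℝ) - 1 / 24)) ≤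
        Real.pi / 2 * Real.sqrt (2 * n / 3) :=
      mul_le_mul hdiv (Real.sqrt_le_sqrt (by nlinarith)) (Real.sqrt_nonneg _) (by positivity)
    exact mul_le_mul_of_nonneg_left (Real.exp_le_exp.2 harg) (by positivity)
  have hA := norm_radA_le k n
  set E := Real.exp (Real.pi / 2 * Real.sqrt (2 * n / 3)) with hE
  have hEpos : 0 < E := Real.exp_pos _
  calc 1 / (Real.pi * Real.sqrt 2) * ‖radA k n‖ * Real.sqrt k * |deriv (radg k) n|
      ≤ 1 / (Real.pi * Real.sqrt 2) * k * Real.sqrt k * ((Real.pi / k) ^ 3 * E) := by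
        gcongr
    _ ≤ Real.pi ^ 2 * auxf k * E := by
        have hkey : 1 / (Real.pi * Real.sqrt 2) * k * Real.sqrt k * (Real.pi / k) ^ 3
            ≤ Real.pi ^ 2 * auxf k := by
          have hsk2 : Real.sqrt k * Real.sqrt k = k := Real.mul_self_sqrt hk0.le
          have hs2 : (1:ℝ) ≤ Real.sqrt 2 := by
            rw [show (1:ℝ) = Real.sqrt 1 by simp]
            exact Real.sqrt_le_sqrt (by norm_num)
          have heq : 1 / (Real.pi * Real.sqrt 2) * k * Real.sqrt k * (Real.pi / k) ^ 3
              = Real.pi ^ 2 / Real.sqrt 2 * auxf k := by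
            unfold auxf
            have h1 : ((k:ℝ) * Real.sqrt k) ≠ 0 := by positivity
            field_simp
            ring_nf
            linear_combination hsk2
          rw [heq]
          have hfnn : 0 ≤ auxf k := by unfold auxf; positivity
          have : Real.pi ^ 2 / Real.sqrt 2 ≤ Real.pi ^ 2 := by
            rw [div_le_iff₀ (by positivity)]
            nlinarith [Real.pi_pos]
          exact mul_le_mul_of_nonneg_right this hfnn
        calc 1 / (Real.pi * Real.sqrt 2) * k * Real.sqrt k * ((Real.pi / k) ^ 3 * E)
            = (1 / (Real.pi * Real.sqrt 2) * k * Real.sqrt k * (Real.pi / k) ^ 3) * E := by ring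
          _ ≤ Real.pi ^ 2 * auxf k * E := mul_le_mul_of_nonneg_right hkey hEpos.le

/-- The constant `S₀ = ∑ (k+2)^{-3/2}`. -/
def auxS : ℝ := ∑' k : ℕ, auxf (k + 2)

lemma summable_auxf_shift : Summable (fun k : ℕ => auxf (k + 2)) :=
  (summable_nat_add_iff 2).2 summable_auxf

lemma auxS_nonneg : 0 ≤ auxS :=
  tsum_nonneg fun k => by unfold auxf; positivity

lemma norm_radS_le {n : ℕ} (hn : 1 ≤ n) :
    ‖radS n‖ ≤ Real.pi ^ 2 * auxS * Real.exp (Real.pi / 2 * Real.sqrt (2 * n / 3)) := by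
  set E := Real.exp (Real.pi / 2 * Real.sqrt (2 * n / 3)) with hE
  have hEpos : 0 < E := Real.exp_pos _
  have hb : ∀ k : ℕ, ‖radR (k + 2) n‖ ≤ Real.pi ^ 2 * E * auxf (k + 2) := by
    intro k
    have := norm_radR_le (k := k + 2) (n := n) (by omega) hn
    calc ‖radR (k + 2) n‖ ≤ Real.pi ^ 2 * auxf (k + 2) * E := this
      _ = Real.pi ^ 2 * E * auxf (k + 2) := by ring
  have hsum2 : Summable (fun k : ℕ => Real.pi ^ 2 * E * auxf (k + 2)) :=
    summable_auxf_shift.mul_left _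
  have hsum1 : Summable (fun k : ℕ => ‖radR (k + 2) n‖) :=
    Summable.of_nonneg_of_le (fun k => norm_nonneg _) hb hsum2
  calc ‖radS n‖ ≤ ∑' k : ℕ, ‖radR (k + 2) n‖ := norm_tsum_le_tsum_norm hsum1
    _ ≤ ∑' k : ℕ, Real.pi ^ 2 * E * auxf (k + 2) := Summable.tsum_le_tsum hb hsum1 hsum2
    _ = Real.pi ^ 2 * E * auxS := by rw [tsum_mul_left]; rfl
    _ = Real.pi ^ 2 * auxS * E := by ring

/-! ### The exponential lower bound -/

lemma exp_ge_quartic {x : ℝ} (hx : 0 ≤ x) : x ^ 4 / 256 ≤ Real.exp x := by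
  have h1 : x / 4 ≤ Real.exp (x / 4) := by
    have := Real.add_one_le_exp (x / 4)
    linarith
  have h2 : (x / 4) ^ 4 ≤ Real.exp (x / 4) ^ 4 :=
    pow_le_pow_left₀ (by linarith) h1 4
  have h3 : Real.exp (x / 4) ^ 4 = Real.exp x := by
    rw [← Real.exp_nat_mul]
    congr 1
    push_cast
    ring
  calc x ^ 4 / 256 = (x / 4) ^ 4 := by ring
    _ ≤ Real.exp (x / 4) ^ 4 := h2
    _ = Real.exp x := h3

/-! ### The main theorem -/

/-- The tail of the Rademacher series beyond the first term satisfies `S(n)/L(n) → 0`. -/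
theorem tail_negligible :
    Filter.Tendsto (fun n : ℕ => radS n / (hardyRamanujanL n : ℂ)) Filter.atTop (nhds 0) := by
  set K : ℝ := Real.pi ^ 2 * auxS * 4 * Real.sqrt 3 * (9216 / Real.pi ^ 4) with hK
  have hKnn : 0 ≤ K := by
    have := auxS_nonneg
    positivity
  have htend : Filter.Tendsto (fun n : ℕ => K / (n:ℝ)) Filter.atTop (nhds 0) :=
    tendsto_const_div_atTop_nhds_zero_nat K
  refine squeeze_zero_norm' ?_ htend
  · filter_upwards [Filter.eventually_ge_atTop 1] with n hn
    have hn1 : (1:ℝ) ≤ (n:ℝ) := by exact_mod_cast hn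
    have hnpos : (0:ℝ) < (n:ℝ) := by linarith
    set a := Real.pi / 2 * Real.sqrt (2 * n / 3) with ha
    have hann : 0 ≤ a := by positivity
    have hW : Real.pi * Real.sqrt (2 * n / 3) = a + a := by rw [ha]; ring
    have hLpos : 0 < hardyRamanujanL n := by
      unfold hardyRamanujanL
      positivity
    have hnorm : ‖radS n / (hardyRamanujanL n : ℂ)‖ = ‖radS n‖ / hardyRamanujanL n := by
      rw [norm_div, Complex.norm_real, Real.norm_eq_abs, abs_of_pos hLpos]
    rw [hnorm]
    have hS := norm_radS_le hn
    have hea : (0:ℝ) < Real.exp a := Real.exp_pos a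
    -- lower bound on exp a
    have hquart : Real.pi ^ 4 * n ^ 2 / 9216 ≤ Real.exp a := by
      have h4 : a ^ 4 = Real.pi ^ 4 * (2 * n / 3) ^ 2 / 16 := by
        rw [ha]
        have : Real.sqrt (2 * n / 3) ^ 4 = (2 * n / 3) ^ 2 := by
          rw [show Real.sqrt (2 * n / 3) ^ 4 = (Real.sqrt (2 * n / 3) ^ 2) ^ 2 by ring,
            Real.sq_sqrt (by positivity)]
        rw [mul_pow, div_pow, this]
        ring
      have := exp_ge_quartic hann
      rw [h4] at this
      calc Real.pi ^ 4 * n ^ 2 / 9216 = Real.pi ^ 4 * (2 * n / 3) ^ 2 / 16 / 256 := by ring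
        _ ≤ Real.exp a := this
    -- the value of L
    have hL : hardyRamanujanL n = Real.exp a * Real.exp a / (4 * n * Real.sqrt 3) := by
      unfold hardyRamanujanL
      rw [hW, Real.exp_add]
      ring
    rw [hL]
    rw [div_div_eq_mul_div, div_le_div_iff₀ (by positivity) hnpos]
    have hS' : ‖radS n‖ ≤ Real.pi ^ 2 * auxS * Real.exp a := by rw [ha]; exact hS
    calc ‖radS n‖ * (4 * n * Real.sqrt 3) * n
        ≤ (Real.pi ^ 2 * auxS * Real.exp a) * (4 * n * Real.sqrt 3) * n := by
          have h0 : (0:ℝ) ≤ 4 * n * Real.sqrt 3 := by positivity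
          have h1 : (0:ℝ) ≤ (n:ℝ) := hnpos.le
          exact mul_le_mul_of_nonneg_right
            (mul_le_mul_of_nonneg_right hS' h0) h1
      _ = (Real.pi ^ 2 * auxS * 4 * Real.sqrt 3) * ((n:ℝ) ^ 2 * Real.exp a) := by ring
      _ ≤ (Real.pi ^ 2 * auxS * 4 * Real.sqrt 3) *
            ((9216 / Real.pi ^ 4 * Real.exp a) * Real.exp a) := by
          have hc0 : 0 ≤ Real.pi ^ 2 * auxS * 4 * Real.sqrt 3 := by
            have := auxS_nonneg
            positivity
          have h9 : (n:ℝ) ^ 2 ≤ 9216 / Real.pi ^ 4 * Real.exp a := by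
            rw [div_mul_eq_mul_div, le_div_iff₀ (by positivity : (0:ℝ) < Real.pi ^ 4)]
            nlinarith
          have h10 : (n:ℝ) ^ 2 * Real.exp a ≤ (9216 / Real.pi ^ 4 * Real.exp a) * Real.exp a :=
            mul_le_mul_of_nonneg_right h9 hea.le
          exact mul_le_mul_of_nonneg_left h10 hc0
      _ = K * (Real.exp a * Real.exp a) := by rw [hK]; ring
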